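/- arXiv:1702.03154 — 5 statements merged into one kernel-verified Lean document; each statement's English description precedes it below -/
import Mathlib

section
/- If 0 < γ ≤ 1/log(2) and N ≥ 0, then the sequence m(d) = ∑_{i<d} |A_i| + 2·|A_d|, with |A_i| = γ·N·(1 - e^{-1/γ})^i, is monotone nondecreasing in the natural number d. -/
/-- If 0 < γ ≤ 1/log 2 and N ≥ 0, the construction memory sequence
m(d) = ∑_{i<d} |A_i| + 2·|A_d|, with |A_i| = γ·N·(1 - e^{-1/γ})^i, is monotone
nondecreasing in d. -/
theorem bbhash_memory_monotone (γ N : ℝ) (hγ0 : 0 < γ) (hγ : γ ≤ 1 / Real.log 2)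
    (hN : 0 ≤ N) :
    Monotone (fun d : ℕ =>
      (∑ i ∈ Finset.range d, γ * N * (1 - Real.exp (-1 / γ)) ^ i)
        + 2 * (γ * N * (1 - Real.exp (-1 / γ)) ^ d)) := by
  have hlog2 : 0 < Real.log 2 := Real.log_pos (by norm_num)
  obtain ⟨r, hr⟩ : ∃ r : ℝ, r = 1 - Real.exp (-1 / γ) := ⟨_, rfl⟩
  rw [← hr]
  have hexp_le : Real.exp (-1 / γ) ≤ 1 / 2 := by
    have h1 : Real.log 2 ≤ 1 / γ := by
      rw [le_div_iff₀ hγ0]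
      calc Real.log 2 * γ ≤ Real.log 2 * (1 / Real.log 2) := by
            exact mul_le_mul_of_nonneg_left hγ hlog2.le
        _ = 1 := by field_simp
    have : -1 / γ ≤ Real.log (1 / 2) := by
      rw [Real.log_div (by norm_num) (by norm_num), Real.log_one, neg_div]
      linarith
    calc Real.exp (-1 / γ) ≤ Real.exp (Real.log (1/2)) := Real.exp_le_exp.mpr this
      _ = 1 / 2 := Real.exp_log (by norm_num)
  have hr_half : (1:ℝ)/2 ≤ r := by rw [hr]; linarith
  have hr_nonneg : 0 ≤ r := by linarith
  apply monotone_nat_of_le_succ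
  intro d
  simp only [Finset.sum_range_succ]
  have hpow : 0 ≤ γ * N * r ^ d := by positivity
  have : γ * N * r ^ d ≤ 2 * (γ * N * r ^ (d + 1)) := by
    rw [pow_succ]
    nlinarith
  linarith
end

section
/- (Lemma 1, first case.) If 0 < γ ≤ 1/log(2) and N ≥ 0, then for every natural number d, the construction memory m(d) = ∑_{i<d} |A_i| + 2·|A_d| (with |A_i| = γ·N·(1 - e^{-1/γ})^i) is at most the final structure size S = γ·e^{1/γ}·N; i.e., the maximal space used during construction does not exceed S. -/
/-- Lemma 1, first case: if 0 < γ ≤ 1/log 2 and N ≥ 0, then for every level d the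
construction memory m(d) = ∑_{i<d} |A_i| + 2·|A_d| (with |A_i| = γ·N·(1 - e^{-1/γ})^i)
is at most the final structure size S = γ·e^{1/γ}·N. -/
theorem bbhash_memory_le_size (γ N : ℝ) (hγ0 : 0 < γ) (hγ : γ ≤ 1 / Real.log 2)
    (hN : 0 ≤ N) (d : ℕ) :
    (∑ i ∈ Finset.range d, γ * N * (1 - Real.exp (-1 / γ)) ^ i)
        + 2 * (γ * N * (1 - Real.exp (-1 / γ)) ^ d)
      ≤ γ * Real.exp (1 / γ) * N := by
  set q : ℝ := Real.exp (-1 / γ) with hq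
  have hq0 : 0 < q := Real.exp_pos _
  have hlog2 : 0 < Real.log 2 := Real.log_pos (by norm_num)
  have hlog : Real.log 2 ≤ 1 / γ := by
    rw [le_div_iff₀ hγ0]
    calc Real.log 2 * γ ≤ Real.log 2 * (1 / Real.log 2) :=
          mul_le_mul_of_nonneg_left hγ hlog2.le
      _ = 1 := by field_simp
  have hq2 : q ≤ 1 / 2 := by
    have h : Real.exp (-1 / γ) ≤ Real.exp (-Real.log 2) := by
      apply Real.exp_le_exp.mpr; rw [neg_div]; linarith
    rw [Real.exp_neg, Real.exp_log (by norm_num : (0:ℝ) < 2)] at h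
    rw [hq]; linarith [h]
  have hE : Real.exp (1 / γ) = q⁻¹ := by
    rw [hq, neg_div, Real.exp_neg, inv_inv]
  have hne : (1 : ℝ) - q ≠ 1 := by
    intro h; exact hq0.ne' (by linarith)
  have hsum : (∑ i ∈ Finset.range d, γ * N * (1 - q) ^ i)
      = γ * N * (((1 - q) ^ d - 1) / ((1 - q) - 1)) := by
    rw [← Finset.mul_sum, geom_sum_eq hne]
  rw [hsum, hE]
  have hpd : 0 ≤ (1 - q) ^ d := pow_nonneg (by linarith) d
  have hγN : 0 ≤ γ * N := mul_nonneg hγ0.le hN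
  have hqinv : 2 ≤ q⁻¹ := by
    rw [show (2:ℝ) = (1/2)⁻¹ by norm_num]
    exact inv_anti₀ hq0 hq2
  have key : γ * q⁻¹ * N
      - (γ * N * (((1 - q) ^ d - 1) / ((1 - q) - 1)) + 2 * (γ * N * (1 - q) ^ d))
      = γ * N * (1 - q) ^ d * (q⁻¹ - 2) := by
    have h1 : q * q⁻¹ = 1 := mul_inv_cancel₀ hq0.ne'
    field_simp
    linear_combination
  nlinarith [mul_nonneg (mul_nonneg hγN hpd) (by linarith : (0:ℝ) ≤ q⁻¹ - 2), key]
end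

section
/- If γ > 1/log(2) and N > 0, then the sequence m(d) = ∑_{i<d} |A_i| + 2·|A_d|, with |A_i| = γ·N·(1 - e^{-1/γ})^i, is strictly decreasing in the natural number d. -/
/-- If γ > 1/log 2 and N > 0, the construction memory sequence
m(d) = ∑_{i<d} |A_i| + 2·|A_d|, with |A_i| = γ·N·(1 - e^{-1/γ})^i, is strictly
decreasing in d. -/
theorem bbhash_memory_strictAnti (γ N : ℝ) (hγ : 1 / Real.log 2 < γ) (hN : 0 < N) :
    StrictAnti (fun d : ℕ =>
      (∑ i ∈ Finset.range d, γ * N * (1 - Real.exp (-1 / γ)) ^ i)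
        + 2 * (γ * N * (1 - Real.exp (-1 / γ)) ^ d)) := by
  have hlog2 : 0 < Real.log 2 := Real.log_pos (by norm_num)
  have hγ0 : 0 < γ := lt_trans (by positivity) hγ
  have hq0 : 0 < 1 - Real.exp (-1 / γ) := by
    have h : Real.exp (-1 / γ) < 1 := by
      rw [Real.exp_lt_one_iff, neg_div]
      have : 0 < 1 / γ := by positivity
      linarith
    linarith
  have hqhalf : 1 - Real.exp (-1 / γ) < 1 / 2 := by
    have h1 : 1 / γ < Real.log 2 := by
      rw [div_lt_iff₀ hγ0]
      calc (1:ℝ) = Real.log 2 * (1 / Real.log 2) := by field_simp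
        _ < Real.log 2 * γ := mul_lt_mul_of_pos_left hγ hlog2
    have h2 : (1:ℝ)/2 < Real.exp (-1 / γ) := by
      have h3 : Real.exp (-Real.log 2) < Real.exp (-1 / γ) := by
        apply Real.exp_lt_exp.mpr
        rw [neg_div]; linarith
      rwa [Real.exp_neg, Real.exp_log (by norm_num : (0:ℝ) < 2), ← one_div] at h3
    linarith
  apply strictAnti_nat_of_succ_lt
  intro d
  simp only [Finset.sum_range_succ]
  have hpow : 0 < γ * N * (1 - Real.exp (-1 / γ)) ^ d := by positivity
  have heq : γ * N * (1 - Real.exp (-1 / γ)) ^ (d + 1)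
      = γ * N * (1 - Real.exp (-1 / γ)) ^ d * (1 - Real.exp (-1 / γ)) := by ring
  have hm := mul_lt_mul_of_pos_left hqhalf hpow
  linarith
end

section
/- (Lemma 1, second case.) If γ > 1/log(2) and N > 0, then for every natural number d, the construction memory m(d) = ∑_{i<d} |A_i| + 2·|A_d| (with |A_i| = γ·N·(1 - e^{-1/γ})^i) satisfies S < m(d) ≤ m(0) < 2·S, where S = γ·e^{1/γ}·N; i.e., the maximal space used during construction is strictly less than twice the final structure size. -/
/-- Lemma 1, second case: if γ > 1/log 2 and N > 0, then for every level d the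
construction memory m(d) = ∑_{i<d} |A_i| + 2·|A_d| (with |A_i| = γ·N·(1 - e^{-1/γ})^i)
satisfies S < m(d) ≤ m(0) < 2·S, where S = γ·e^{1/γ}·N. -/
theorem bbhash_memory_lt_two_size (γ N : ℝ) (hγ : 1 / Real.log 2 < γ) (hN : 0 < N) (d : ℕ) :
    γ * Real.exp (1 / γ) * N
        < (∑ i ∈ Finset.range d, γ * N * (1 - Real.exp (-1 / γ)) ^ i)
          + 2 * (γ * N * (1 - Real.exp (-1 / γ)) ^ d) ∧
    (∑ i ∈ Finset.range d, γ * N * (1 - Real.exp (-1 / γ)) ^ i)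
          + 2 * (γ * N * (1 - Real.exp (-1 / γ)) ^ d)
        ≤ (∑ i ∈ Finset.range 0, γ * N * (1 - Real.exp (-1 / γ)) ^ i)
          + 2 * (γ * N * (1 - Real.exp (-1 / γ)) ^ 0) ∧
    (∑ i ∈ Finset.range 0, γ * N * (1 - Real.exp (-1 / γ)) ^ i)
          + 2 * (γ * N * (1 - Real.exp (-1 / γ)) ^ 0)
        < 2 * (γ * Real.exp (1 / γ) * N) := by
  have hl2 : 0 < Real.log 2 := Real.log_pos (by norm_num)
  have hγ0 : 0 < γ := lt_trans (by positivity) hγ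
  set E := Real.exp (-1 / γ) with hE
  have hE0 : 0 < E := Real.exp_pos _
  have hE1 : E < 1 := by
    rw [hE]
    apply Real.exp_lt_one_iff.mpr
    have h : 0 < 1 / γ := by positivity
    rw [neg_div]; linarith
  have hEhalf : 1 / 2 < E := by
    have h1 : 1 / γ < Real.log 2 := by
      rw [div_lt_iff₀ hl2] at hγ
      rw [div_lt_iff₀ hγ0]
      nlinarith
    have h2 : Real.exp (-Real.log 2) < E := by
      rw [hE]
      apply Real.exp_lt_exp.mpr
      rw [neg_div]
      linarith
    rwa [Real.exp_neg, Real.exp_log (by norm_num : (0:ℝ) < 2),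
      show (2:ℝ)⁻¹ = 1/2 by norm_num] at h2
  have hinv : Real.exp (1 / γ) = E⁻¹ := by
    rw [hE, ← Real.exp_neg]; ring_nf
  have hq0 : 0 < 1 - E := by linarith
  have hq1 : (1 - E) ≠ 1 := by intro h; linarith [hE0]
  have hPpos : 0 < (1 - E) ^ d := pow_pos hq0 d
  have hPle : (1 - E) ^ d ≤ 1 := pow_le_one₀ hq0.le (by linarith)
  have hsumE : E * (∑ i ∈ Finset.range d, γ * N * (1 - E) ^ i)
      = γ * N * (1 - (1 - E) ^ d) := by
    rw [← Finset.mul_sum, geom_sum_eq hq1]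
    field_simp [hE0.ne']
    ring
  have hES : E * (γ * E⁻¹ * N) = γ * N := by field_simp
  rw [hinv]
  simp only [Finset.range_zero, Finset.sum_empty, pow_zero, mul_one, zero_add]
  have hγN : 0 < γ * N := mul_pos hγ0 hN
  refine ⟨?_, ?_, ?_⟩
  · rw [← mul_lt_mul_iff_right₀ hE0, mul_add, hsumE, hES]
    nlinarith [mul_pos (mul_pos hγN hPpos) (show (0:ℝ) < 2 * E - 1 by linarith)]
  · rw [← mul_le_mul_iff_right₀ hE0, mul_add, hsumE]
    nlinarith [mul_nonneg (mul_nonneg hγN.le (by linarith : (0:ℝ) ≤ 1 - (1 - E) ^ d))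
      (by linarith : (0:ℝ) ≤ 2 * E - 1)]
  · have h1 : 1 < E⁻¹ := (one_lt_inv₀ hE0).mpr hE1
    nlinarith [mul_pos hγN (show (0:ℝ) < E⁻¹ - 1 by linarith)]
end

section
/- For every real γ ≥ 1 and real N > 0, the construction memory ratio is bounded by 2: for every natural number d, m(d) < 2·S, where m(d) = ∑_{i<d} |A_i| + 2·|A_d| with |A_i| = γ·N·(1 - e^{-1/γ})^i and S = γ·e^{1/γ}·N. -/
/-- For every γ ≥ 1 and N > 0, the construction memory is bounded by twice the final
size: for every d, m(d) < 2·S, where m(d) = ∑_{i<d} |A_i| + 2·|A_d| with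
|A_i| = γ·N·(1 - e^{-1/γ})^i and S = γ·e^{1/γ}·N. -/
theorem bbhash_memory_lt_twice (γ N : ℝ) (hγ : 1 ≤ γ) (hN : 0 < N) (d : ℕ) :
    (∑ i ∈ Finset.range d, γ * N * (1 - Real.exp (-1 / γ)) ^ i)
        + 2 * (γ * N * (1 - Real.exp (-1 / γ)) ^ d)
      < 2 * (γ * Real.exp (1 / γ) * N) := by
  have hγ0 : 0 < γ := lt_of_lt_of_le one_pos hγ
  set x := Real.exp (-1 / γ) with hxdef
  have hx0 : 0 < x := Real.exp_pos _
  have hx1 : x < 1 := by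
    apply Real.exp_lt_one_iff.mpr
    have h : -1 / γ = -(1 / γ) := by ring
    have : 0 < 1 / γ := by positivity
    linarith
  have hE : Real.exp (1 / γ) * x = 1 := by
    rw [hxdef, ← Real.exp_add]
    ring_nf
    exact Real.exp_zero
  have hq1 : (1 - x) ≠ 1 := by intro h; nlinarith
  have hsum : ∑ i ∈ Finset.range d, γ * N * (1 - x) ^ i
      = γ * N * (((1 - x) ^ d - 1) / ((1 - x) - 1)) := by
    rw [← Finset.mul_sum, geom_sum_eq hq1]
  rw [hsum]
  have hp0 : 0 < (1 - x) ^ d := pow_pos (by linarith) d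
  have hp1 : (1 - x) ^ d ≤ 1 := pow_le_one₀ (by linarith) (by linarith)
  have hdiv : (((1 - x) ^ d - 1) / ((1 - x) - 1)) = (1 - (1 - x) ^ d) / x := by
    rw [div_eq_div_iff (by linarith) (ne_of_gt hx0)]; ring
  rw [hdiv]
  have hEx : Real.exp (1 / γ) = 1 / x := by
    field_simp at hE ⊢; linarith
  rw [hEx]
  set p := (1 - x) ^ d
  rw [show γ * N * ((1 - p) / x) + 2 * (γ * N * p)
        = (γ * N * (1 - p) + 2 * (γ * N * p) * x) / x by field_simp,
    show 2 * (γ * (1 / x) * N) = (2 * γ * N) / x by field_simp,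
    div_lt_div_iff₀ hx0 hx0]
  have hγN : 0 < γ * N := by positivity
  have key : p * (2 * x - 1) < 1 := by
    nlinarith [mul_lt_mul_of_pos_left hx1 hp0]
  have h2 := mul_lt_mul_of_pos_left key (mul_pos hγN hx0)
  nlinarith [h2]
end
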